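/- A finite simple graph G has no K₄ minor if and only if G can be reduced to the empty graph by iteratively applying, in any order, the following three operations: removing a vertex of degree at most 1; removing a vertex of degree 2 lying in a triangle; and contracting an edge incident to a vertex of degree 2 not lying in a triangle. -/

import Mathlib

open SimpleGraph

/-- `G` has a `K₄` minor (branch-set formulation: four nonempty, pairwise disjoint,
connected branch sets with an edge between every two of them). -/
def HasK4Minor {V : Type*} (G : SimpleGraph V) : Prop :=
  ∃ B : Fin 4 → Set V,
    (∀ i, (B i).Nonempty) ∧
    (∀ i, (G.induce (B i)).Connected) ∧
    (∀ i j, i ≠ j → Disjoint (B i) (B j)) ∧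
    (∀ i j, i ≠ j → ∃ u ∈ B i, ∃ v ∈ B j, G.Adj u v)

/-- `X` is a transversal of `G`: the graph `G − X` has no `K₄` minor. -/
def IsTransversal {V : Type*} (G : SimpleGraph V) (X : Finset V) : Prop :=
  ¬ HasK4Minor (G.induce ((↑X : Set V)ᶜ))

/-- `s(G)`: the minimum size of a transversal of `G`. -/
noncomputable def transNum {V : Type*} (G : SimpleGraph V) : ℕ :=
  sInf {n : ℕ | ∃ X : Finset V, X.card = n ∧ IsTransversal G X}

/-- The graph obtained from `G` by removing the vertex `v` (encoded on the same vertex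
type: `v` keeps existing but becomes isolated, which is equivalent to deleting it). -/
def eraseVertex {V : Type*} (G : SimpleGraph V) (v : V) : SimpleGraph V where
  Adj a b := G.Adj a b ∧ a ≠ v ∧ b ≠ v
  symm := ⟨by rintro a b ⟨h, ha, hb⟩; exact ⟨h.symm, hb, ha⟩⟩
  loopless := ⟨by rintro a ⟨h, -, -⟩; exact G.ne_of_adj h rfl⟩

/-- The graph obtained from `G` by contracting the edge `uv` towards `u` (encoded on the
same vertex type: `v` becomes isolated and its other neighbors become neighbors of `u`;
loops and parallel edges are discarded). -/
def contractTo {V : Type*} (G : SimpleGraph V) (u v : V) : SimpleGraph V where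
  Adj a b := a ≠ b ∧ a ≠ v ∧ b ≠ v ∧
    (G.Adj a b ∨ (a = u ∧ G.Adj v b) ∨ (b = u ∧ G.Adj v a))
  symm := ⟨by
    rintro a b ⟨hne, ha, hb, h⟩
    refine ⟨hne.symm, hb, ha, ?_⟩
    rcases h with h | ⟨h1, h2⟩ | ⟨h1, h2⟩
    · exact Or.inl h.symm
    · exact Or.inr (Or.inr ⟨h1, h2⟩)
    · exact Or.inr (Or.inl ⟨h1, h2⟩)⟩
  loopless := ⟨by rintro a ⟨hne, -⟩; exact hne rfl⟩

/-- `G` can be reduced to the empty graph by iteratively (in any order):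
removing a vertex of degree at most 1; removing a degree-2 vertex lying in a triangle;
contracting an edge incident to a degree-2 vertex not lying in a triangle.
(Removed/contracted vertices are encoded as isolated vertices, so the empty graph is
encoded by the edgeless graph `⊥`; isolated vertices have degree 0 and can always be
removed, so this encoding is equivalent.) -/
inductive ReducesToEmpty {V : Type*} : SimpleGraph V → Prop
  | bot : ReducesToEmpty ⊥
  | delete_low_degree (G : SimpleGraph V) (v : V)
      (hdeg : (G.neighborSet v).Subsingleton)
      (h : ReducesToEmpty (eraseVertex G v)) : ReducesToEmpty G
  | delete_triangle (G : SimpleGraph V) (v x y : V)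
      (hxy : x ≠ y) (hN : G.neighborSet v = {x, y}) (hadj : G.Adj x y)
      (h : ReducesToEmpty (eraseVertex G v)) : ReducesToEmpty G
  | contract (G : SimpleGraph V) (u v x : V)
      (hux : u ≠ x) (hN : G.neighborSet v = {u, x}) (hnadj : ¬ G.Adj u x)
      (h : ReducesToEmpty (contractTo G u v)) : ReducesToEmpty G

/-!
Each reduction step can be undone on `K₄` models: a vertex of degree at most two can be cut out
of its branch set, because walks through it can be rerouted along the edge that the step creates
(or keeps) between its two neighbours. Conversely, a graph without `K₄` minor has a non-isolated
vertex of degree at most two (Dirac). In an edge-minimal counterexample of minimum degree three,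
every edge lies in a triangle (otherwise contract it) and has an end of degree three (otherwise
delete it); the neighbourhood of a vertex of degree three then spans a `K₄`, or one or two
contractions towards it give a smaller counterexample.
-/
open Relation

section

variable {V : Type*}

theorem Relation.ReflTransGen.bypass {α : Type*} {r r' : α → α → Prop} {v : α} (hv : ¬ r v v)
    (hstep : ∀ a b, r a b → a ≠ v → b ≠ v → r' a b)
    (hskip : ∀ a b, r a v → r v b → a ≠ b → r' a b) {x y : α}
    (h : ReflTransGen r x y) (hx : x ≠ v) (hy : y ≠ v) : ReflTransGen r' x y := by
  suffices ∀ {y}, ReflTransGen r x y →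
      (y ≠ v → ReflTransGen r' x y) ∧ (y = v → ∃ p ≠ v, ReflTransGen r' x p ∧ r p v) from
    (this h).1 hy
  intro y h
  induction h with
  | refl => exact ⟨fun _ => .refl, fun e => absurd e hx⟩
  | @tail b c _ hbc ih =>
    by_cases hb : b = v
    · obtain ⟨p, hpv, hxp, hpb⟩ := ih.2 hb
      subst hb
      have hc : c ≠ b := fun e => hv (e ▸ hbc)
      refine ⟨fun _ => ?_, fun e => absurd e hc⟩
      by_cases hpc : p = c
      · exact hpc ▸ hxp
      · exact hxp.tail (hskip p c hpb hbc hpc)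
    · exact ⟨fun hc => (ih.1 hb).tail (hstep b c hbc hb hc),
        fun hc => ⟨b, hb, ih.1 hb, hc ▸ hbc⟩⟩

/-- Connectivity of `G.induce s`, phrased on `V` instead of the subtype `↥s`. -/
def ConnectedOn (G : SimpleGraph V) (s : Set V) : Prop :=
  ∀ ⦃x⦄, x ∈ s → ∀ ⦃y⦄, y ∈ s → ReflTransGen (fun a b => a ∈ s ∧ b ∈ s ∧ G.Adj a b) x y

theorem connectedOn_iff {G : SimpleGraph V} {s : Set V} (hs : s.Nonempty) :
    ConnectedOn G s ↔ (G.induce s).Connected := by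
  have : Nonempty s := hs.to_subtype
  rw [connected_iff, and_iff_left this]
  refine ⟨fun h ⟨x, hx⟩ ⟨y, hy⟩ => ?_, fun h x hx y hy => ?_⟩
  · have hxy := h hx hy
    revert hy
    induction hxy with
    | refl => exact fun _ => .refl _
    | tail _ hbc ih =>
      exact fun _ => (ih hbc.1).trans (Adj.reachable (G := G.induce s) hbc.2.2)
  · exact ReflTransGen.lift Subtype.val (fun a b hab => ⟨a.2, b.2, hab⟩) _ _
      ((reachable_iff_reflTransGen _ _).1 (h ⟨x, hx⟩ ⟨y, hy⟩))

theorem ConnectedOn.of_subset {G H : SimpleGraph V} {s t : Set V} (hs : ConnectedOn G s)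
    (hst : s ⊆ t)
    (hadj : ∀ a ∈ s, ∀ b ∈ s, G.Adj a b →
      ReflTransGen (fun a b => a ∈ t ∧ b ∈ t ∧ H.Adj a b) a b)
    (hcover : ∀ y ∈ t, y ∉ s → ∃ x ∈ s, H.Adj x y) :
    ConnectedOn H t := by
  have hchain : ∀ ⦃x⦄, x ∈ s → ∀ ⦃y⦄, y ∈ s →
      ReflTransGen (fun a b => a ∈ t ∧ b ∈ t ∧ H.Adj a b) x y := fun x hx y hy =>
    ReflTransGen.lift' id (fun a b ⟨ha, hb, hab⟩ => hadj a ha b hb hab) _ _ (hs hx hy)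
  have hreach : ∀ y ∈ t, ∃ x ∈ s, ReflTransGen (fun a b => a ∈ t ∧ b ∈ t ∧ H.Adj a b) x y ∧
      ReflTransGen (fun a b => a ∈ t ∧ b ∈ t ∧ H.Adj a b) y x := by
    intro y hy
    by_cases hys : y ∈ s
    · exact ⟨y, hys, .refl, .refl⟩
    · obtain ⟨x, hx, hxy⟩ := hcover y hy hys
      exact ⟨x, hx, .single ⟨hst hx, hy, hxy⟩, .single ⟨hy, hst hx, hxy.symm⟩⟩
  intro x hx y hy
  obtain ⟨x₀, hx₀, -, hxx₀⟩ := hreach x hx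
  obtain ⟨y₀, hy₀, hy₀y, -⟩ := hreach y hy
  exact (hxx₀.trans (hchain hx₀ hy₀)).trans hy₀y

structure IsK4Model (G : SimpleGraph V) (B : Fin 4 → Set V) : Prop where
  nonempty : ∀ i, (B i).Nonempty
  connectedOn : ∀ i, ConnectedOn G (B i)
  disjoint : ∀ i j, i ≠ j → Disjoint (B i) (B j)
  exists_adj : ∀ i j, i ≠ j → ∃ a ∈ B i, ∃ b ∈ B j, G.Adj a b

theorem hasK4Minor_iff_exists_isK4Model {G : SimpleGraph V} :
    HasK4Minor G ↔ ∃ B, IsK4Model G B := by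
  constructor
  · rintro ⟨B, hne, hconn, hdisj, hadj⟩
    exact ⟨B, hne, fun i => (connectedOn_iff (hne i)).2 (hconn i), hdisj, hadj⟩
  · rintro ⟨B, hne, hconn, hdisj, hadj⟩
    exact ⟨B, hne, fun i => (connectedOn_iff (hne i)).1 (hconn i), hdisj, hadj⟩

namespace IsK4Model

variable {G G' : SimpleGraph V} {B : Fin 4 → Set V} {i j : Fin 4} {a b u v x y : V}

theorem ne_of_mem (h : IsK4Model G B) (hij : i ≠ j) (ha : a ∈ B i) (hb : b ∈ B j) : a ≠ b :=
  fun e => Set.disjoint_left.1 (h.disjoint i j hij) ha (e ▸ hb)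

theorem mono (h : IsK4Model G B) (hle : G ≤ G') : IsK4Model G' B where
  nonempty := h.nonempty
  connectedOn i _ hx _ hy :=
    ReflTransGen.mono (fun _ _ ⟨ha, hb, hab⟩ => ⟨ha, hb, hle hab⟩) _ _ (h.connectedOn i hx hy)
  disjoint := h.disjoint
  exists_adj i j hij :=
    let ⟨a, ha, b, hb, hab⟩ := h.exists_adj i j hij
    ⟨a, ha, b, hb, hle hab⟩

theorem eq_singleton_or_exists_adj_mem (h : IsK4Model G B) (hv : v ∈ B i) :
    B i = {v} ∨ ∃ z ∈ B i, G.Adj v z := by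
  refine or_iff_not_imp_left.2 fun hi => ?_
  obtain ⟨w, hw, hwv⟩ : ∃ w ∈ B i, w ≠ v := by
    by_contra! H
    exact hi (Set.eq_singleton_iff_unique_mem.2 ⟨hv, H⟩)
  rcases (h.connectedOn i hv hw).cases_head with e | ⟨z, ⟨-, hz, hvz⟩, -⟩
  · exact absurd e.symm hwv
  · exact ⟨z, hz, hvz⟩

theorem exists_adj_of_mem (h : IsK4Model G B) (hv : v ∈ B i) : ∃ z, G.Adj v z := by
  rcases h.eq_singleton_or_exists_adj_mem hv with hi | ⟨z, -, hvz⟩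
  · obtain ⟨j, hj⟩ := exists_ne i
    obtain ⟨a, ha, b, -, hab⟩ := h.exists_adj i j hj.symm
    rw [hi, Set.mem_singleton_iff] at ha
    exact ⟨b, ha ▸ hab⟩
  · exact ⟨z, hvz⟩

/-- A vertex of degree at most two cannot form a branch set on its own, since it would need
neighbours in three pairwise disjoint branch sets. -/
theorem exists_adj_mem_of_neighborSet_subset (h : IsK4Model G B)
    (hN : G.neighborSet v ⊆ {x, y}) (hv : v ∈ B i) : ∃ z ∈ B i, G.Adj v z := by
  refine (h.eq_singleton_or_exists_adj_mem hv).resolve_left fun hi => ?_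
  have hnbr : ∀ k : Fin 4, k ≠ 0 → ∃ b ∈ B (i + k), b = x ∨ b = y := by
    intro k hk
    obtain ⟨a, ha, b, hb, hab⟩ := h.exists_adj i (i + k) (by simpa using hk)
    rw [hi, Set.mem_singleton_iff] at ha
    exact ⟨b, hb, by simpa using hN (ha ▸ hab)⟩
  obtain ⟨b₁, hb₁, h₁⟩ := hnbr 1 (by decide)
  obtain ⟨b₂, hb₂, h₂⟩ := hnbr 2 (by decide)
  obtain ⟨b₃, hb₃, h₃⟩ := hnbr 3 (by decide)
  have h₁₂ := h.ne_of_mem (by simp) hb₁ hb₂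
  have h₁₃ := h.ne_of_mem (by simp) hb₁ hb₃
  have h₂₃ := h.ne_of_mem (by simp) hb₂ hb₃
  rcases h₁ with rfl | rfl <;> rcases h₂ with rfl | rfl <;> rcases h₃ with rfl | rfl <;>
    simp_all

/-- Walks through `v` are short-cut along the edge that `G'` provides between two neighbours
of `v`. -/
theorem bypass (h : IsK4Model G B) (hN : G.neighborSet v ⊆ {x, y})
    (hG' : ∀ a b, G.Adj a b → a ≠ v → b ≠ v → G'.Adj a b)
    (hpair : ∀ a b, G.Adj v a → G.Adj v b → a ≠ b → G'.Adj a b) :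
    IsK4Model G' fun i => B i \ {v} where
  nonempty i := by
    by_cases hv : v ∈ B i
    · obtain ⟨z, hz, hvz⟩ := h.exists_adj_mem_of_neighborSet_subset hN hv
      exact ⟨z, hz, hvz.ne'⟩
    · obtain ⟨w, hw⟩ := h.nonempty i
      exact ⟨w, hw, fun e => hv (e ▸ hw)⟩
  connectedOn i _ hx _ hy := by
    refine (h.connectedOn i hx.1 hy.1).bypass (fun hvv => hvv.2.2.ne rfl) ?_ ?_ hx.2 hy.2
    · rintro a b ⟨ha, hb, hab⟩ hav hbv
      exact ⟨⟨ha, hav⟩, ⟨hb, hbv⟩, hG' a b hab hav hbv⟩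
    · rintro a b ⟨ha, -, hav⟩ ⟨-, hb, hvb⟩ hab
      exact ⟨⟨ha, hav.ne⟩, ⟨hb, hvb.ne'⟩, hpair a b hav.symm hvb hab⟩
  disjoint i j hij := (h.disjoint i j hij).mono Set.sdiff_subset Set.sdiff_subset
  exists_adj i j hij := by
    have key : ∀ i j, i ≠ j → ∀ a ∈ B i, ∀ b ∈ B j, G.Adj a b → b ≠ v →
        ∃ a' ∈ B i \ {v}, G'.Adj a' b := by
      intro i j hij a ha b hb hab hbv
      by_cases hav : a = v
      · subst hav
        obtain ⟨z, hz, hvz⟩ := h.exists_adj_mem_of_neighborSet_subset hN ha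
        exact ⟨z, ⟨hz, hvz.ne'⟩, hpair z b hvz hab (h.ne_of_mem hij hz hb)⟩
      · exact ⟨a, ⟨ha, hav⟩, hG' a b hab hav hbv⟩
    obtain ⟨a, ha, b, hb, hab⟩ := h.exists_adj i j hij
    by_cases hbv : b = v
    · have hav : a ≠ v := hbv ▸ hab.ne
      obtain ⟨b', hb', hab'⟩ := key j i hij.symm b hb a ha hab.symm hav
      exact ⟨a, ⟨ha, hav⟩, b', hb', hab'.symm⟩
    · obtain ⟨a', ha', hab'⟩ := key i j hij a ha b hb hab hbv
      exact ⟨a', ha', b, ⟨hb, hbv⟩, hab'⟩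

theorem of_contractTo (h : IsK4Model (contractTo G u v) B) (huv : G.Adj u v) :
    IsK4Model G fun i => B i ∪ {w | w = v ∧ u ∈ B i} := by
  have hvB : ∀ i, v ∉ B i := fun i hv =>
    let ⟨_, hvz⟩ := h.exists_adj_of_mem hv
    hvz.2.1 rfl
  refine ⟨fun i => (h.nonempty i).mono Set.subset_union_left, fun i => ?_, fun i j hij => ?_,
    fun i j hij => ?_⟩
  · refine (h.connectedOn i).of_subset Set.subset_union_left ?_ ?_
    · rintro a ha b hb ⟨-, -, -, hab | ⟨rfl, hvb⟩ | ⟨rfl, hva⟩⟩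
      · exact .single ⟨.inl ha, .inl hb, hab⟩
      · exact .head ⟨.inl ha, .inr ⟨rfl, ha⟩, huv⟩ (.single ⟨.inr ⟨rfl, ha⟩, .inl hb, hvb⟩)
      · exact .head ⟨.inl ha, .inr ⟨rfl, hb⟩, hva.symm⟩
          (.single ⟨.inr ⟨rfl, hb⟩, .inl hb, huv.symm⟩)
    · rintro y (hy | ⟨rfl, hu⟩) hyB
      · exact absurd hy hyB
      · exact ⟨u, hu, huv⟩
  · rw [Set.disjoint_left]
    rintro a (ha | ⟨rfl, hui⟩) (hb | ⟨hav, huj⟩)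
    · exact Set.disjoint_left.1 (h.disjoint i j hij) ha hb
    · exact hvB i (hav ▸ ha)
    · exact hvB j hb
    · exact Set.disjoint_left.1 (h.disjoint i j hij) hui huj
  · obtain ⟨a, ha, b, hb, -, -, -, hab | ⟨rfl, hvb⟩ | ⟨rfl, hva⟩⟩ := h.exists_adj i j hij
    · exact ⟨a, .inl ha, b, .inl hb, hab⟩
    · exact ⟨v, .inr ⟨rfl, ha⟩, b, .inl hb, hvb⟩
    · exact ⟨a, .inl ha, v, .inr ⟨rfl, hb⟩, hva.symm⟩

theorem singleton {f : Fin 4 → V} (hf : ∀ i j, i ≠ j → G.Adj (f i) (f j)) :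
    IsK4Model G fun i => {f i} where
  nonempty i := Set.singleton_nonempty _
  connectedOn i x hx y hy := by rw [hx, hy]
  disjoint i j hij := Set.disjoint_singleton.2 (hf i j hij).ne
  exists_adj i j hij := ⟨f i, rfl, f j, rfl, hf i j hij⟩

end IsK4Model

namespace HasK4Minor

variable {G G' : SimpleGraph V} {u v x y : V}

theorem mono (h : HasK4Minor G) (hle : G ≤ G') : HasK4Minor G' := by
  obtain ⟨B, hB⟩ := hasK4Minor_iff_exists_isK4Model.1 h
  exact hasK4Minor_iff_exists_isK4Model.2 ⟨B, hB.mono hle⟩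

theorem of_contractTo (h : HasK4Minor (contractTo G u v)) (huv : G.Adj u v) : HasK4Minor G := by
  obtain ⟨B, hB⟩ := hasK4Minor_iff_exists_isK4Model.1 h
  exact hasK4Minor_iff_exists_isK4Model.2 ⟨_, hB.of_contractTo huv⟩

theorem bypass (h : HasK4Minor G) (hN : G.neighborSet v ⊆ {x, y})
    (hG' : ∀ a b, G.Adj a b → a ≠ v → b ≠ v → G'.Adj a b)
    (hpair : ∀ a b, G.Adj v a → G.Adj v b → a ≠ b → G'.Adj a b) : HasK4Minor G' := by
  obtain ⟨B, hB⟩ := hasK4Minor_iff_exists_isK4Model.1 h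
  exact hasK4Minor_iff_exists_isK4Model.2 ⟨_, hB.bypass hN hG' hpair⟩

end HasK4Minor

theorem hasK4Minor_of_adj {G : SimpleGraph V} {a b c d : V} (hab : G.Adj a b) (hac : G.Adj a c)
    (had : G.Adj a d) (hbc : G.Adj b c) (hbd : G.Adj b d) (hcd : G.Adj c d) : HasK4Minor G := by
  refine hasK4Minor_iff_exists_isK4Model.2 ⟨_, IsK4Model.singleton (f := ![a, b, c, d]) ?_⟩
  intro i j hij
  fin_cases i <;> fin_cases j <;> simp_all [G.adj_comm]

theorem not_hasK4Minor_bot : ¬ HasK4Minor (⊥ : SimpleGraph V) := fun ⟨_, _, _, _, hadj⟩ =>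
  let ⟨_, _, _, _, hab⟩ := hadj 0 1 (by decide)
  hab

theorem pair_eq_of_neighborSet_eq {G : SimpleGraph V} {v x y a b : V}
    (hN : G.neighborSet v = {x, y}) (ha : G.Adj v a) (hb : G.Adj v b) (hab : a ≠ b) :
    s(a, b) = s(x, y) := by
  rw [← mem_neighborSet, hN, Set.mem_insert_iff, Set.mem_singleton_iff] at ha hb
  rcases ha with rfl | rfl <;> rcases hb with rfl | rfl
  exacts [absurd rfl hab, rfl, Sym2.eq_swap, absurd rfl hab]

theorem ReducesToEmpty.not_hasK4Minor {G : SimpleGraph V} (h : ReducesToEmpty G) :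
    ¬ HasK4Minor G := by
  induction h with
  | bot => exact not_hasK4Minor_bot
  | delete_low_degree G v hdeg _ ih =>
    obtain ⟨x, hx⟩ : ∃ x, G.neighborSet v ⊆ {x, x} := by
      rcases hdeg.eq_empty_or_singleton with hN | ⟨x, hN⟩
      · exact ⟨v, hN ▸ Set.empty_subset _⟩
      · exact ⟨x, by simp [hN]⟩
    exact fun hK => ih (hK.bypass hx (fun a b hab hav hbv => ⟨hab, hav, hbv⟩)
      fun a b hva hvb hab => absurd (hdeg hva hvb) hab)
  | delete_triangle G v x y hxy hN hadj _ ih =>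
    refine fun hK => ih (hK.bypass hN.subset (fun a b hab hav hbv => ⟨hab, hav, hbv⟩) ?_)
    intro a b hva hvb hab
    rw [← mem_edgeSet, pair_eq_of_neighborSet_eq hN hva hvb hab, mem_edgeSet]
    have hvx : G.Adj v x := show x ∈ G.neighborSet v by simp [hN]
    have hvy : G.Adj v y := show y ∈ G.neighborSet v by simp [hN]
    exact ⟨hadj, hvx.ne', hvy.ne'⟩
  | contract G u v x hux hN hnadj _ ih =>
    refine fun hK => ih (hK.bypass hN.subset
      (fun a b hab hav hbv => ⟨hab.ne, hav, hbv, .inl hab⟩) ?_)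
    intro a b hva hvb hab
    rw [← mem_edgeSet, pair_eq_of_neighborSet_eq hN hva hvb hab, mem_edgeSet]
    have hvu : G.Adj v u := show u ∈ G.neighborSet v by simp [hN]
    have hvx : G.Adj v x := show x ∈ G.neighborSet v by simp [hN]
    exact ⟨hux, hvu.ne', hvx.ne', .inr (.inl ⟨rfl, hvx⟩)⟩

theorem adj_iff_of_neighborSet_eq {G : SimpleGraph V} {v x y z t : V}
    (hN : G.neighborSet v = {x, y, z}) : G.Adj v t ↔ t = x ∨ t = y ∨ t = z := by
  rw [← mem_neighborSet, hN]
  simp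

theorem eraseVertex_le {G : SimpleGraph V} {v : V} : eraseVertex G v ≤ G := fun _ _ h => h.1

section EdgeCount

variable [Finite V] {G : SimpleGraph V} {u v w : V}

theorem ncard_edgeSet_eraseVertex_lt (hvw : G.Adj v w) :
    (eraseVertex G v).edgeSet.ncard < G.edgeSet.ncard := by
  refine Set.ncard_lt_ncard ((Set.ssubset_iff_of_subset (edgeSet_mono eraseVertex_le)).2
    ⟨s(v, w), hvw, fun h : (eraseVertex G v).Adj v w => h.2.1 rfl⟩)

theorem ncard_edgeSet_contractTo_lt (huv : G.Adj u v) :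
    (contractTo G u v).edgeSet.ncard < G.edgeSet.ncard := by
  classical
  let f : V → V := Function.update id v u
  have hsub : (contractTo G u v).edgeSet ⊆ Sym2.map f '' (G.edgeSet \ {s(u, v)}) := by
    intro e he
    induction e using Sym2.ind with
    | _ a b =>
      rw [mem_edgeSet] at he
      obtain ⟨hab, hav, hbv, hG | ⟨rfl, hvb⟩ | ⟨rfl, hva⟩⟩ := he
      · refine ⟨s(a, b), ⟨hG, ?_⟩, by simp [f, hav, hbv]⟩
        simp [hav, hbv]
      · refine ⟨s(v, b), ⟨hvb, ?_⟩, by simp [f, hbv]⟩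
        simp [hbv, Ne.symm hab]
      · refine ⟨s(a, v), ⟨hva.symm, ?_⟩, by simp [f, hav]⟩
        simp [hav, hab]
  calc (contractTo G u v).edgeSet.ncard
      ≤ (Sym2.map f '' (G.edgeSet \ {s(u, v)})).ncard := Set.ncard_le_ncard hsub
    _ ≤ (G.edgeSet \ {s(u, v)}).ncard := Set.ncard_image_le
    _ < G.edgeSet.ncard := Set.ncard_sdiff_singleton_lt_of_mem huv

end EdgeCount

theorem Set.ncard_sub_one_le_ncard_sdiff_singleton {α : Type*} (s : Set α) (a : α) :
    s.ncard - 1 ≤ (s \ {a}).ncard := by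
  simpa using Set.le_ncard_sdiff {a} s

section ContractTo

variable {G : SimpleGraph V} {u v w b : V}

theorem exists_adj_of_contractTo_adj (h : (contractTo G u v).Adj w b) (hwu : w ≠ u) :
    ∃ c, G.Adj w c := by
  obtain ⟨-, -, -, hwb | ⟨rfl, -⟩ | ⟨-, hvw⟩⟩ := h
  exacts [⟨b, hwb⟩, absurd rfl hwu, ⟨v, hvw.symm⟩]

theorem sdiff_subset_neighborSet_contractTo (hwv : w ≠ v) :
    G.neighborSet w \ {v} ⊆ (contractTo G u v).neighborSet w :=
  fun _ ⟨hwb, hbv⟩ => ⟨hwb.ne, hwv, hbv, .inl hwb⟩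

theorem sdiff_subset_neighborSet_contractTo_self (huv : u ≠ v) :
    G.neighborSet v \ {u} ⊆ (contractTo G u v).neighborSet u :=
  fun _ ⟨hvb, hbu⟩ => ⟨Ne.symm hbu, huv, hvb.ne', .inr (.inl ⟨rfl, hvb⟩)⟩

theorem mem_neighborSet_contractTo (huv : u ≠ v) (hwu : w ≠ u) (hwv : w ≠ v) (hvw : G.Adj v w) :
    u ∈ (contractTo G u v).neighborSet w :=
  ⟨hwu, hwv, huv, .inr (.inr ⟨rfl, hvw⟩)⟩

variable [Finite V]

theorem ncard_neighborSet_sub_one_le_contractTo (hwv : w ≠ v) :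
    (G.neighborSet w).ncard - 1 ≤ ((contractTo G u v).neighborSet w).ncard :=
  (Set.ncard_sub_one_le_ncard_sdiff_singleton _ _).trans
    (Set.ncard_le_ncard (sdiff_subset_neighborSet_contractTo hwv))

theorem ncard_neighborSet_le_contractTo (huv : u ≠ v) (hwu : w ≠ u) (hwv : w ≠ v)
    (h : G.Adj v w → ¬ G.Adj u w) :
    (G.neighborSet w).ncard ≤ ((contractTo G u v).neighborSet w).ncard := by
  by_cases hvw : G.Adj v w
  · calc (G.neighborSet w).ncard = (insert u (G.neighborSet w \ {v})).ncard := by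
          rw [Set.ncard_insert_of_notMem fun hu => h hvw hu.1.symm,
            Set.ncard_sdiff_singleton_add_one (s := G.neighborSet w) hvw.symm]
      _ ≤ _ := Set.ncard_le_ncard (Set.insert_subset
          (mem_neighborSet_contractTo huv hwu hwv hvw) (sdiff_subset_neighborSet_contractTo hwv))
  · calc (G.neighborSet w).ncard = (G.neighborSet w \ {v}).ncard := by
          rw [Set.sdiff_singleton_eq_self fun h => hvw h.symm]
      _ ≤ _ := Set.ncard_le_ncard (sdiff_subset_neighborSet_contractTo hwv)

end ContractTo

/-- `G'` need not literally be a minor of `G`: only its `K₄` minors have to lift. -/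
def SmallerMinor (G' G : SimpleGraph V) : Prop :=
  G'.edgeSet.ncard < G.edgeSet.ncard ∧ (HasK4Minor G' → HasK4Minor G)

section SmallerMinor

variable {G G₁ G₂ G₃ : SimpleGraph V}

theorem SmallerMinor.trans (h₁₂ : SmallerMinor G₁ G₂) (h₂₃ : SmallerMinor G₂ G₃) :
    SmallerMinor G₁ G₃ :=
  ⟨h₁₂.1.trans h₂₃.1, h₂₃.2 ∘ h₁₂.2⟩

variable [Finite V]

theorem smallerMinor_deleteEdges {p q : V} (hpq : G.Adj p q) :
    SmallerMinor (G.deleteEdges {s(p, q)}) G := by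
  refine ⟨?_, fun hK => hK.mono (deleteEdges_le _)⟩
  rw [edgeSet_deleteEdges]
  exact Set.ncard_sdiff_singleton_lt_of_mem hpq

theorem smallerMinor_contractTo {u v : V} (huv : G.Adj u v) : SmallerMinor (contractTo G u v) G :=
  ⟨ncard_edgeSet_contractTo_lt huv, fun hK => hK.of_contractTo huv⟩

end SmallerMinor

section Triangles

variable {G : SimpleGraph V} {w a b c : V}

/-- In a graph where every edge lies in a triangle, a third neighbour `t` of `w` comes with a
fourth one, the apex of a triangle on `wt`. -/
theorem four_le_ncard_neighborSet [Finite V]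
    (htri : ∀ ⦃p q⦄, G.Adj p q → ∃ r, G.Adj p r ∧ G.Adj q r)
    (hw : 3 ≤ (G.neighborSet w).ncard) (ha : G.Adj w a) (hb : G.Adj w b) (hab : a ≠ b)
    (hfar : ∀ t, G.Adj w t → t ≠ a → t ≠ b → ¬ G.Adj a t ∧ ¬ G.Adj b t) :
    4 ≤ (G.neighborSet w).ncard := by
  have hsub : ({a, b} : Set V) ⊆ G.neighborSet w := Set.pair_subset ha hb
  have hcard := Set.ncard_sdiff_add_ncard_of_subset hsub
  rw [Set.ncard_pair hab] at hcard
  obtain ⟨t, hwt, htab⟩ := Set.nonempty_of_ncard_ne_zero (s := G.neighborSet w \ {a, b})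
    (by omega)
  simp only [Set.mem_insert_iff, Set.mem_singleton_iff, not_or] at htab
  obtain ⟨s, hws, hts⟩ := htri hwt
  obtain ⟨hat, hbt⟩ := hfar t hwt htab.1 htab.2
  have hts' : ({t, s} : Set V) ⊆ G.neighborSet w \ {a, b} := by
    refine Set.insert_subset ⟨hwt, by simpa using htab⟩ (Set.singleton_subset_iff.2 ⟨hws, ?_⟩)
    simp only [Set.mem_insert_iff, Set.mem_singleton_iff, not_or]
    exact ⟨fun e => hat (e ▸ hts.symm), fun e => hbt (e ▸ hts.symm)⟩
  have := Set.ncard_le_ncard hts'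
  rw [Set.ncard_pair hts.ne] at this
  omega

theorem adj_or_exists_center (hab : a ≠ b) (hac : a ≠ c) (hbc : b ≠ c)
    (ha : G.Adj a b ∨ G.Adj a c) (hb : G.Adj b a ∨ G.Adj b c) (hc : G.Adj c a ∨ G.Adj c b) :
    (G.Adj a b ∧ G.Adj a c ∧ G.Adj b c) ∨
      ∃ x y z, ({x, y, z} : Set V) = {a, b, c} ∧ y ≠ z ∧ G.Adj x y ∧ G.Adj x z ∧ ¬ G.Adj y z := by
  by_cases h₁ : G.Adj a b
  · by_cases h₂ : G.Adj a c
    · by_cases h₃ : G.Adj b c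
      · exact .inl ⟨h₁, h₂, h₃⟩
      · exact .inr ⟨a, b, c, rfl, hbc, h₁, h₂, h₃⟩
    · refine .inr ⟨b, a, c, Set.insert_comm _ _ _, hac, h₁.symm, ?_, h₂⟩
      exact (hc.resolve_left fun h => h₂ h.symm).symm
  · refine .inr ⟨c, a, b, ?_, hab, (ha.resolve_left h₁).symm,
      (hb.resolve_left fun h => h₁ h.symm).symm, h₁⟩
    ext
    simp only [Set.mem_insert_iff, Set.mem_singleton_iff]
    tauto

end Triangles

def MinDegreeThree (G : SimpleGraph V) : Prop :=
  ∀ ⦃v w⦄, G.Adj v w → 3 ≤ (G.neighborSet v).ncard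

namespace MinDegreeThree

variable {G : SimpleGraph V} {p q v x y z : V}

theorem exists_adj_ne (h : MinDegreeThree G) (hpq : G.Adj p q) (r : V) :
    ∃ t, G.Adj p t ∧ t ≠ r := by
  have := Set.ncard_sub_one_le_ncard_sdiff_singleton (G.neighborSet p) r
  obtain ⟨t, hpt, htr⟩ := Set.nonempty_of_ncard_ne_zero (s := G.neighborSet p \ {r})
    (by have := h hpq; omega)
  exact ⟨t, hpt, htr⟩

variable [Finite V]

theorem deleteEdges (h : MinDegreeThree G) (hp : 4 ≤ (G.neighborSet p).ncard)
    (hq : 4 ≤ (G.neighborSet q).ncard) : MinDegreeThree (G.deleteEdges {s(p, q)}) := by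
  have hend : ∀ {a b : V}, 4 ≤ (G.neighborSet a).ncard →
      3 ≤ ((G.deleteEdges {s(a, b)}).neighborSet a).ncard := fun {a b} ha =>
    calc 3 ≤ (G.neighborSet a).ncard - 1 := by omega
      _ ≤ (G.neighborSet a \ {b}).ncard := Set.ncard_sub_one_le_ncard_sdiff_singleton _ _
      _ ≤ _ := Set.ncard_le_ncard fun c ⟨hac, hcb⟩ => by
          simp_all [deleteEdges_adj]
  intro w w' hww'
  rcases eq_or_ne w p with rfl | hwp
  · exact hend hp
  rcases eq_or_ne w q with rfl | hwq
  · rw [Sym2.eq_swap]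
    exact hend hq
  refine (h (deleteEdges_le _ hww')).trans (Set.ncard_le_ncard fun c hwc => ?_)
  simp_all [deleteEdges_adj]

theorem contractTo_of_disjoint (h : MinDegreeThree G) (hpq : G.Adj p q)
    (hdisj : Disjoint (G.neighborSet p) (G.neighborSet q)) :
    MinDegreeThree (contractTo G p q) := by
  intro w w' hww'
  have hwq : w ≠ q := hww'.2.1
  rcases eq_or_ne w p with rfl | hwp
  · have hdisj : Disjoint (G.neighborSet w \ {q}) (G.neighborSet q \ {w}) :=
      hdisj.mono Set.sdiff_subset Set.sdiff_subset
    calc 3 ≤ (G.neighborSet w \ {q}).ncard + (G.neighborSet q \ {w}).ncard := by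
          have := Set.ncard_sub_one_le_ncard_sdiff_singleton (G.neighborSet w) q
          have := Set.ncard_sub_one_le_ncard_sdiff_singleton (G.neighborSet q) w
          have := h hpq
          have := h hpq.symm
          omega
      _ = (G.neighborSet w \ {q} ∪ G.neighborSet q \ {w}).ncard :=
          (Set.ncard_union_eq hdisj).symm
      _ ≤ _ := Set.ncard_le_ncard (Set.union_subset (sdiff_subset_neighborSet_contractTo hwq)
          (sdiff_subset_neighborSet_contractTo_self hpq.ne))
  · obtain ⟨c, hwc⟩ := exists_adj_of_contractTo_adj hww' hwp
    exact (h hwc).trans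
      (ncard_neighborSet_le_contractTo hpq.ne hwp hwq fun hqw hpw =>
        Set.disjoint_left.1 hdisj hpw hqw)

theorem contractTo_of_four_le (h : MinDegreeThree G) (hN : G.neighborSet v = {x, y, z})
    (hyz : y ≠ z) (hnyz : ¬ G.Adj y z) (hx : 4 ≤ (G.neighborSet x).ncard) :
    MinDegreeThree (contractTo G y v) := by
  have hv : ∀ {t}, G.Adj v t ↔ t = x ∨ t = y ∨ t = z := adj_iff_of_neighborSet_eq hN
  have hvy : G.Adj v y := hv.2 (.inr (.inl rfl))
  have hvz : G.Adj v z := hv.2 (.inr (.inr rfl))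
  intro w w' hww'
  have hwv : w ≠ v := hww'.2.1
  rcases eq_or_ne w y with rfl | hwy
  · calc 3 ≤ (G.neighborSet w \ {v}).ncard + 1 := by
          have := Set.ncard_sub_one_le_ncard_sdiff_singleton (G.neighborSet w) v
          have := h hvy.symm
          omega
      _ = (insert z (G.neighborSet w \ {v})).ncard :=
          (Set.ncard_insert_of_notMem fun hz => hnyz hz.1).symm
      _ ≤ _ := Set.ncard_le_ncard (Set.insert_subset
          (sdiff_subset_neighborSet_contractTo_self hwv ⟨hvz, Ne.symm hyz⟩)
          (sdiff_subset_neighborSet_contractTo hwv))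
  rcases eq_or_ne w x with rfl | hwx
  · have := ncard_neighborSet_sub_one_le_contractTo (G := G) (u := y) hwv
    omega
  · obtain ⟨c, hwc⟩ := exists_adj_of_contractTo_adj hww' hwy
    refine (h hwc).trans (ncard_neighborSet_le_contractTo hvy.ne' hwy hwv fun hvw hyw => ?_)
    rcases hv.1 hvw with rfl | rfl | rfl
    exacts [hwx rfl, hwy rfl, hnyz hyw]

/-- Contracting only `v` into `x` would leave `x` with degree two; after merging `y` as well, `x`
sees `z` and at least two further neighbours of `y`. -/
theorem contractTo_contractTo (h : MinDegreeThree G) (hN : G.neighborSet v = {x, y, z})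
    (hNx : G.neighborSet x = {v, y, z}) (hyz : y ≠ z) (hnyz : ¬ G.Adj y z)
    (hy : 4 ≤ (G.neighborSet y).ncard) (hz : 4 ≤ (G.neighborSet z).ncard) :
    MinDegreeThree (contractTo (contractTo G x v) x y) := by
  have hv : ∀ {t}, G.Adj v t ↔ t = x ∨ t = y ∨ t = z := adj_iff_of_neighborSet_eq hN
  have hx : ∀ {t}, G.Adj x t ↔ t = v ∨ t = y ∨ t = z := adj_iff_of_neighborSet_eq hNx
  have hvx : G.Adj v x := hv.2 (.inl rfl)
  have hvy : G.Adj v y := hv.2 (.inr (.inl rfl))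
  have hxy : G.Adj x y := hx.2 (.inr (.inl rfl))
  have hxz : G.Adj x z := hx.2 (.inr (.inr rfl))
  have hvz : G.Adj v z := hv.2 (.inr (.inr rfl))
  set G₁ := contractTo G x v
  intro w w' hww'
  have hwy : w ≠ y := hww'.2.1
  rcases eq_or_ne w x with rfl | hwx
  · have hz₂ : z ∈ (contractTo G₁ w y).neighborSet w :=
      sdiff_subset_neighborSet_contractTo hwy
        ⟨sdiff_subset_neighborSet_contractTo hvx.ne' ⟨hxz, hvz.ne'⟩, Ne.symm hyz⟩
    have hy₂ : (G.neighborSet y \ {v}) \ {w} ⊆ (contractTo G₁ w y).neighborSet w :=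
      (Set.sdiff_subset_sdiff_left (sdiff_subset_neighborSet_contractTo hvy.ne')).trans
        (sdiff_subset_neighborSet_contractTo_self hxy.ne)
    calc 3 ≤ ((G.neighborSet y \ {v}) \ {w}).ncard + 1 := by
          have := Set.ncard_sub_one_le_ncard_sdiff_singleton (G.neighborSet y) v
          have := Set.ncard_sub_one_le_ncard_sdiff_singleton (G.neighborSet y \ {v}) w
          omega
      _ = (insert z ((G.neighborSet y \ {v}) \ {w})).ncard :=
          (Set.ncard_insert_of_notMem fun hz' => hnyz hz'.1.1).symm
      _ ≤ _ := Set.ncard_le_ncard (Set.insert_subset hz₂ hy₂)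
  obtain ⟨c, hwc⟩ := exists_adj_of_contractTo_adj hww' hwx
  have hwv : w ≠ v := hwc.2.1
  have hny₁ : ¬ G₁.Adj y z := fun ⟨_, _, _, h'⟩ => by
    rcases h' with h' | ⟨h', -⟩ | ⟨h', -⟩
    exacts [hnyz h', hxy.ne h'.symm, hxz.ne h'.symm]
  rcases eq_or_ne w z with rfl | hwz
  · calc 3 ≤ (G.neighborSet w).ncard - 1 := by omega
      _ ≤ (G₁.neighborSet w).ncard := ncard_neighborSet_sub_one_le_contractTo hwv
      _ ≤ _ := ncard_neighborSet_le_contractTo hxy.ne hwx hwy fun h' => absurd h' hny₁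
  · have hnx₁ : ¬ G₁.Adj x w := fun ⟨_, _, _, h'⟩ => by
      rcases h' with h' | ⟨-, h'⟩ | ⟨h', -⟩
      · rcases hx.1 h' with rfl | rfl | rfl <;> contradiction
      · rcases hv.1 h' with rfl | rfl | rfl <;> contradiction
      · exact hwx h'
    obtain ⟨d, hwd⟩ := exists_adj_of_contractTo_adj hwc hwx
    calc 3 ≤ (G.neighborSet w).ncard := h hwd
      _ ≤ (G₁.neighborSet w).ncard := ncard_neighborSet_le_contractTo hvx.ne' hwx hwv fun h' => by
          rcases hv.1 h' with rfl | rfl | rfl <;> contradiction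
      _ ≤ _ := ncard_neighborSet_le_contractTo hxy.ne hwx hwy fun _ => hnx₁

theorem exists_smallerMinor_of_twins (h : MinDegreeThree G)
    (htri : ∀ ⦃p q⦄, G.Adj p q → ∃ r, G.Adj p r ∧ G.Adj q r)
    (hN : G.neighborSet v = {x, y, z}) (hNx : G.neighborSet x = {v, y, z}) (hyz : y ≠ z)
    (hnyz : ¬ G.Adj y z) : ∃ G', G' ≠ ⊥ ∧ MinDegreeThree G' ∧ SmallerMinor G' G := by
  have hv : ∀ {t}, G.Adj v t ↔ t = x ∨ t = y ∨ t = z := adj_iff_of_neighborSet_eq hN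
  have hx : ∀ {t}, G.Adj x t ↔ t = v ∨ t = y ∨ t = z := adj_iff_of_neighborSet_eq hNx
  have hvx : G.Adj v x := hv.2 (.inl rfl)
  have hvy : G.Adj v y := hv.2 (.inr (.inl rfl))
  have hvz : G.Adj v z := hv.2 (.inr (.inr rfl))
  have hxy : G.Adj x y := hx.2 (.inr (.inl rfl))
  have hxz : G.Adj x z := hx.2 (.inr (.inr rfl))
  have hfar : ∀ {w}, w = y ∨ w = z → ∀ t, G.Adj w t → t ≠ v → t ≠ x →
      ¬ G.Adj v t ∧ ¬ G.Adj x t := by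
    intro w hw t hwt htv htx
    have hty : t ≠ y := by
      rintro rfl
      rcases hw with rfl | rfl
      exacts [hwt.ne rfl, hnyz hwt.symm]
    have htz : t ≠ z := by
      rintro rfl
      rcases hw with rfl | rfl
      exacts [hnyz hwt, hwt.ne rfl]
    exact ⟨fun hvt => by rcases hv.1 hvt with rfl | rfl | rfl <;> contradiction,
      fun hxt => by rcases hx.1 hxt with rfl | rfl | rfl <;> contradiction⟩
  have hy4 := four_le_ncard_neighborSet htri (h hxy.symm) hvy.symm hxy.symm hvx.ne
    (hfar (.inl rfl))
  have hz4 := four_le_ncard_neighborSet htri (h hxz.symm) hvz.symm hxz.symm hvx.ne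
    (hfar (.inr rfl))
  have hxy₁ : (contractTo G x v).Adj x y := ⟨hxy.ne, hvx.ne', hvy.ne', .inl hxy⟩
  have hxz₂ : (contractTo (contractTo G x v) x y).Adj x z :=
    ⟨hxz.ne, hxy.ne, Ne.symm hyz, .inl ⟨hxz.ne, hvx.ne', hvz.ne', .inl hxz⟩⟩
  exact ⟨_, ne_bot_iff_exists_adj.2 ⟨x, z, hxz₂⟩, h.contractTo_contractTo hN hNx hyz hnyz hy4 hz4,
    (smallerMinor_contractTo hxy₁).trans (smallerMinor_contractTo hvx.symm)⟩

theorem exists_smallerMinor_of_neighborSet_eq (h : MinDegreeThree G)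
    (htri : ∀ ⦃p q⦄, G.Adj p q → ∃ r, G.Adj p r ∧ G.Adj q r)
    (hN : G.neighborSet v = {x, y, z}) (hyz : y ≠ z) (hxy : G.Adj x y) (hxz : G.Adj x z)
    (hnyz : ¬ G.Adj y z) : ∃ G', G' ≠ ⊥ ∧ MinDegreeThree G' ∧ SmallerMinor G' G := by
  have hv : ∀ {t}, G.Adj v t ↔ t = x ∨ t = y ∨ t = z := adj_iff_of_neighborSet_eq hN
  have hvx : G.Adj v x := hv.2 (.inl rfl)
  have hvy : G.Adj v y := hv.2 (.inr (.inl rfl))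
  have hvz : G.Adj v z := hv.2 (.inr (.inr rfl))
  by_cases hx4 : 4 ≤ (G.neighborSet x).ncard
  · exact ⟨contractTo G y v, ne_bot_iff_exists_adj.2 ⟨x, y, hxy.ne, hvx.ne', hvy.ne', .inl hxy⟩,
      h.contractTo_of_four_le hN hyz hnyz hx4, smallerMinor_contractTo hvy.symm⟩
  refine h.exists_smallerMinor_of_twins htri hN ?_ hyz hnyz
  refine (Set.eq_of_subset_of_ncard_le ?_ ?_).symm
  · simp [Set.insert_subset_iff, hvx.symm, hxy, hxz]
  · rw [Set.ncard_eq_three.2 ⟨v, y, z, hvy.ne, hvz.ne, hyz, rfl⟩]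
    omega

theorem exists_smallerMinor_of_triangles (h : MinDegreeThree G) (hG : G ≠ ⊥)
    (htri : ∀ ⦃p q⦄, G.Adj p q → ∃ r, G.Adj p r ∧ G.Adj q r)
    (h4 : ∀ ⦃p q⦄, G.Adj p q → 4 ≤ (G.neighborSet p).ncard → (G.neighborSet q).ncard < 4) :
    HasK4Minor G ∨ ∃ G', G' ≠ ⊥ ∧ MinDegreeThree G' ∧ SmallerMinor G' G := by
  obtain ⟨v, hv3⟩ : ∃ v, (G.neighborSet v).ncard = 3 := by
    obtain ⟨p, q, hpq⟩ := ne_bot_iff_exists_adj.1 hG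
    by_cases hp : 4 ≤ (G.neighborSet p).ncard
    · exact ⟨q, by have := h4 hpq hp; have := h hpq.symm; omega⟩
    · exact ⟨p, by have := h hpq; omega⟩
  obtain ⟨a, b, c, hab, hac, hbc, hN⟩ := Set.ncard_eq_three.1 hv3
  have hv : ∀ {t}, G.Adj v t ↔ t = a ∨ t = b ∨ t = c := adj_iff_of_neighborSet_eq hN
  have hva : G.Adj v a := hv.2 (.inl rfl)
  have hvb : G.Adj v b := hv.2 (.inr (.inl rfl))
  have hvc : G.Adj v c := hv.2 (.inr (.inr rfl))
  have hnbr : ∀ {t}, G.Adj v t → ∃ s, G.Adj t s ∧ (s = a ∨ s = b ∨ s = c) := fun hvt =>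
    let ⟨s, hvs, hts⟩ := htri hvt
    ⟨s, hts, hv.1 hvs⟩
  have ha : G.Adj a b ∨ G.Adj a c := by
    obtain ⟨s, has, rfl | rfl | rfl⟩ := hnbr hva
    exacts [absurd has (G.irrefl), .inl has, .inr has]
  have hb : G.Adj b a ∨ G.Adj b c := by
    obtain ⟨s, hbs, rfl | rfl | rfl⟩ := hnbr hvb
    exacts [.inl hbs, absurd hbs (G.irrefl), .inr hbs]
  have hc : G.Adj c a ∨ G.Adj c b := by
    obtain ⟨s, hcs, rfl | rfl | rfl⟩ := hnbr hvc
    exacts [.inl hcs, .inr hcs, absurd hcs (G.irrefl)]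
  rcases adj_or_exists_center hab hac hbc ha hb hc with
    ⟨h₁, h₂, h₃⟩ | ⟨x, y, z, hxyz, hyz, hxy, hxz, hnyz⟩
  · exact .inl (hasK4Minor_of_adj hva hvb hvc h₁ h₂ h₃)
  · exact .inr <|
      h.exists_smallerMinor_of_neighborSet_eq htri (hN.trans hxyz.symm) hyz hxy hxz hnyz

theorem exists_smallerMinor (h : MinDegreeThree G) (hG : G ≠ ⊥) :
    HasK4Minor G ∨ ∃ G', G' ≠ ⊥ ∧ MinDegreeThree G' ∧ SmallerMinor G' G := by
  by_cases h4 : ∃ p q, G.Adj p q ∧ 4 ≤ (G.neighborSet p).ncard ∧ 4 ≤ (G.neighborSet q).ncard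
  · obtain ⟨p, q, hpq, hp, hq⟩ := h4
    obtain ⟨t, hpt, htq⟩ := h.exists_adj_ne hpq q
    refine .inr ⟨_, ne_bot_iff_exists_adj.2 ⟨p, t, ?_⟩, h.deleteEdges hp hq,
      smallerMinor_deleteEdges hpq⟩
    simp [deleteEdges_adj, hpt, htq, hpq.ne]
  by_cases hdisj : ∃ p q, G.Adj p q ∧ Disjoint (G.neighborSet p) (G.neighborSet q)
  · obtain ⟨p, q, hpq, hdisj⟩ := hdisj
    obtain ⟨t, hpt, htq⟩ := h.exists_adj_ne hpq q
    have hpt' : (contractTo G p q).Adj p t := ⟨hpt.ne, hpq.ne, htq, .inl hpt⟩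
    exact .inr ⟨_, ne_bot_iff_exists_adj.2 ⟨p, t, hpt'⟩, h.contractTo_of_disjoint hpq hdisj,
      smallerMinor_contractTo hpq⟩
  refine h.exists_smallerMinor_of_triangles hG (fun p q hpq => ?_) fun p q hpq hp => ?_
  · obtain ⟨r, hpr, hqr⟩ := Set.not_disjoint_iff.1 fun hd => hdisj ⟨p, q, hpq, hd⟩
    exact ⟨r, hpr, hqr⟩
  · exact lt_of_not_ge fun hq => h4 ⟨p, q, hpq, hp, hq⟩

theorem hasK4Minor (h : MinDegreeThree G) (hG : G ≠ ⊥) : HasK4Minor G := by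
  induction hn : G.edgeSet.ncard using Nat.strong_induction_on generalizing G with
  | _ n ih =>
    obtain hK | ⟨G', hG', h', hsmall⟩ := h.exists_smallerMinor hG
    · exact hK
    · exact hsmall.2 (ih _ (hn ▸ hsmall.1) h' hG' rfl)

end MinDegreeThree

theorem exists_adj_ncard_neighborSet_le_two [Finite V] {G : SimpleGraph V} (hG : G ≠ ⊥)
    (h : ¬ HasK4Minor G) : ∃ v w, G.Adj v w ∧ (G.neighborSet v).ncard ≤ 2 := by
  by_contra! H
  exact h (MinDegreeThree.hasK4Minor (fun v w hvw => H v w hvw) hG)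

theorem reducesToEmpty_of_not_hasK4Minor [Finite V] {G : SimpleGraph V} (h : ¬ HasK4Minor G) :
    ReducesToEmpty G := by
  induction hn : G.edgeSet.ncard using Nat.strong_induction_on generalizing G with
  | _ n ih =>
    rcases eq_or_ne G ⊥ with rfl | hG
    · exact .bot
    obtain ⟨v, w, hvw, hv⟩ := exists_adj_ncard_neighborSet_le_two hG h
    have herase : ReducesToEmpty (eraseVertex G v) :=
      ih _ (hn ▸ ncard_edgeSet_eraseVertex_lt hvw) (fun hK => h (hK.mono eraseVertex_le)) rfl
    rcases hv.lt_or_eq with hv | hv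
    · exact .delete_low_degree G v (Set.ncard_le_one_iff_subsingleton.1 (by omega)) herase
    obtain ⟨x, y, hxy, hN⟩ := Set.ncard_eq_two.1 hv
    by_cases hadj : G.Adj x y
    · exact .delete_triangle G v x y hxy hN hadj herase
    have hvx : G.Adj v x := show x ∈ G.neighborSet v by simp [hN]
    exact .contract G x v y hxy hN hadj (ih _ (hn ▸ ncard_edgeSet_contractTo_lt hvx.symm)
      (fun hK => h (hK.of_contractTo hvx.symm)) rfl)

end

/-- A finite simple graph has no `K₄` minor iff it can be reduced to the empty graph
by the three reduction operations. -/
theorem statement8 {V : Type*} [Fintype V] (G : SimpleGraph V) :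
    ¬ HasK4Minor G ↔ ReducesToEmpty G :=
  ⟨reducesToEmpty_of_not_hasK4Minor, ReducesToEmpty.not_hasK4Minor⟩
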